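/- arXiv:1502.05463 — 6 statements merged into one kernel-verified Lean document; each statement's English description precedes it below -/
import Mathlib

section
/- Let [ab] denote p_a r_b - p_b r_a. For real numbers (p_i,r_i), (p_j,r_j), (p_k,r_k), the sum of symbols (ijki)+(ikji)+(jiik)+(kiij)+(jiki)+(kiji), where (abcd) = (p_a r_c - p_c r_a)(p_a - p_b)(r_c - r_d), equals ([ij] - [ik] + [jk])^2. -/
/-- Sum of symbols with three indices, one repeated, equals ([ij]-[ik]+[jk])^2. -/
theorem three_index_symbol_sum (pi ri pj rj pk rk : ℝ) :
    letI sym : ℝ → ℝ → ℝ → ℝ → ℝ → ℝ → ℝ → ℝ → ℝ :=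
      fun pa ra pb rb pc rc pd rd =>
        (pa * rc - pc * ra) * (pa - pb) * (rc - rd)
    sym pi ri pj rj pk rk pi ri + sym pi ri pk rk pj rj pi ri
      + sym pj rj pi ri pi ri pk rk + sym pk rk pi ri pi ri pj rj
      + sym pj rj pi ri pk rk pi ri + sym pk rk pi ri pj rj pi ri
      = ((pi * rj - pj * ri) - (pi * rk - pk * ri) + (pj * rk - pk * rj)) ^ 2 := by ring
end

section
/- For four distinct indices i,j,k,l with associated points (p_a, r_a) ∈ ℝ², the sum over all 24 permutations σ of {i,j,k,l} of the symbol (σ(i)σ(j)σ(k)σ(l)), where (abcd) = (p_a r_c - p_c r_a)(p_a - p_b)(r_c - r_d), equals ([ij]-[ik]+[jk])^2 + ([jk]-[jl]+[kl])^2 + ([kl]-[ki]+[li])^2 + ([li]-[lj]+[ij])^2, where [ab] = p_a r_b - p_b r_a. -/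
private lemma perm_sum {M : Type*} [AddCommMonoid M] {n : ℕ} (f : Equiv.Perm (Fin (n+1)) → M) :
    ∑ σ : Equiv.Perm (Fin (n+1)), f σ
      = ∑ a : Fin (n+1), ∑ σ : Equiv.Perm (Fin n), f (Equiv.Perm.decomposeFin.symm (a, σ)) := by
  rw [← Equiv.sum_comp Equiv.Perm.decomposeFin.symm, Fintype.sum_prod_type]

/-- Sum over all 24 permutations of four distinct indices of the symbol (σ(i)σ(j)σ(k)σ(l)). -/
theorem four_index_symbol_sum (p r : Fin 4 → ℝ) :
    letI sym : Fin 4 → Fin 4 → Fin 4 → Fin 4 → ℝ := fun a b c d =>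
      (p a * r c - p c * r a) * (p a - p b) * (r c - r d)
    letI br : Fin 4 → Fin 4 → ℝ := fun a b => p a * r b - p b * r a
    ∑ σ : Equiv.Perm (Fin 4), sym (σ 0) (σ 1) (σ 2) (σ 3)
      = (br 0 1 - br 0 2 + br 1 2) ^ 2 + (br 1 2 - br 1 3 + br 2 3) ^ 2
        + (br 2 3 - br 2 0 + br 3 0) ^ 2 + (br 3 0 - br 3 1 + br 0 1) ^ 2 := by
  simp only [perm_sum]
  simp only [show (1:Fin 4) = Fin.succ 0 from rfl, show (2:Fin 4) = Fin.succ 1 from rfl,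
    show (3:Fin 4) = Fin.succ 2 from rfl, show (1:Fin 3) = Fin.succ 0 from rfl,
    show (2:Fin 3) = Fin.succ 1 from rfl, show (1:Fin 2) = Fin.succ 0 from rfl,
    Equiv.Perm.decomposeFin_symm_apply_zero, Equiv.Perm.decomposeFin_symm_apply_succ,
    Fin.sum_univ_succ, Finset.univ_unique, Finset.sum_singleton]
  simp only [Equiv.swap_apply_def]
  norm_num [Fin.ext_iff]
  ring
end

section
/- ∫_0^∞ ∫_0^∞ x y / (1 + x² + y² + x² y² + x⁴)^4 dx dy = 7(−9 + 2√3 π)/648. -/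
/-!
Since `1 + x² + y² + x²y² + x⁴ = (1 + x² + x⁴) + (1 + x²) y²`, the inner integral is
elementary: `∫₀^∞ y / (A + B y²)⁴ dy = 1 / (6 B A³)`. The outer integral
`∫₀^∞ x / (6 (1 + x²)(1 + x² + x⁴)³) dx` is rational in `t = x²`; partial fractions give a
primitive in `t` with a logarithmic, an arctangent and a rational part, and the arctangent,
rising from `π / 6` at `t = 0` to `π / 2` at infinity, produces the `√3 π`.
-/

open MeasureTheory Real Filter Set Topology

theorem integral_Ioi_div_add_mul_sq_pow_succ {A B : ℝ} (hA : 0 < A) (hB : 0 < B) {n : ℕ}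
    (hn : n ≠ 0) :
    ∫ y in Ioi (0 : ℝ), y / (A + B * y ^ 2) ^ (n + 1) = 1 / (2 * n * B * A ^ n) := by
  obtain ⟨m, rfl⟩ := Nat.exists_eq_add_one_of_ne_zero hn
  have hD : ∀ y : ℝ, 0 < A + B * y ^ 2 := fun y => by positivity
  set F : ℝ → ℝ := fun y => -1 / (2 * (m + 1) * B * (A + B * y ^ 2) ^ (m + 1))
  have hderiv : ∀ y ∈ Ici (0 : ℝ), HasDerivAt F (y / (A + B * y ^ 2) ^ (m + 1 + 1)) y := by
    intro y _
    have hDy := hD y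
    have hinner : HasDerivAt (fun y => A + B * y ^ 2) (B * (2 * y)) y := by
      simpa using ((hasDerivAt_pow 2 y).const_mul B).const_add A
    have hdenom : HasDerivAt (fun y => 2 * (m + 1) * B * (A + B * y ^ 2) ^ (m + 1))
        (2 * (m + 1) * B * ((m + 1 : ℕ) * (A + B * y ^ 2) ^ m * (B * (2 * y)))) y := by
      simpa using (hinner.pow (m + 1)).const_mul (2 * (m + 1) * B)
    refine ((hasDerivAt_const y (-1 : ℝ)).div hdenom (by positivity)).congr_deriv ?_
    field_simp
    push_cast
    ring
  have hlim : Tendsto F atTop (𝓝 0) := by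
    refine tendsto_const_nhds.div_atTop (Tendsto.const_mul_atTop (by positivity) ?_)
    refine (tendsto_pow_atTop m.succ_ne_zero).comp (tendsto_atTop_add_const_left _ _ ?_)
    exact (tendsto_pow_atTop two_ne_zero).const_mul_atTop hB
  rw [integral_Ioi_of_hasDerivAt_of_nonneg' hderiv
    (fun y hy => div_nonneg (le_of_lt hy) (pow_nonneg (hD y).le _)) hlim]
  simp [F, neg_div]

lemma one_add_add_sq_pos (t : ℝ) : 0 < 1 + t + t ^ 2 := by nlinarith [sq_nonneg (2 * t + 1)]

noncomputable def outerPrimitive (t : ℝ) : ℝ :=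
  log ((1 + t) ^ 2 / (1 + t + t ^ 2)) / 24 + 7 * √3 / 108 * arctan ((2 * t + 1) / √3)
    + (4 * t + 5) / (72 * (1 + t + t ^ 2)) + (t + 2) / (72 * (1 + t + t ^ 2) ^ 2)

lemma hasDerivAt_arctan_two_mul_add_one_div_sqrt_three (t : ℝ) :
    HasDerivAt (fun t => arctan ((2 * t + 1) / √3)) (√3 / (2 * (1 + t + t ^ 2))) t := by
  have h3 : √3 ^ 2 = 3 := sq_sqrt (by norm_num)
  have hQ := one_add_add_sq_pos t
  have harg : HasDerivAt (fun t => (2 * t + 1) / √3) (2 / √3) t := by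
    simpa using (((hasDerivAt_id t).const_mul 2).add_const 1).div_const √3
  refine harg.arctan.congr_deriv ?_
  rw [div_pow, h3]
  field_simp
  rw [h3]
  ring

lemma hasDerivAt_outerPrimitive {t : ℝ} (ht : 1 + t ≠ 0) :
    HasDerivAt outerPrimitive (1 / (12 * (1 + t) * (1 + t + t ^ 2) ^ 3)) t := by
  have h3 : √3 ^ 2 = 3 := sq_sqrt (by norm_num)
  have hQ := one_add_add_sq_pos t
  have hlin : HasDerivAt (fun t : ℝ => 1 + t) 1 t := by simpa using (hasDerivAt_id t).const_add 1
  have hquad : HasDerivAt (fun t : ℝ => 1 + t + t ^ 2) (1 + 2 * t) t := by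
    simpa using hlin.fun_add (hasDerivAt_pow 2 t)
  have hlog := ((hlin.fun_pow 2).fun_div hquad hQ.ne').log (by positivity)
  have hrat1 := (((hasDerivAt_id t).const_mul 4).add_const 5).fun_div (hquad.const_mul 72)
    (by positivity)
  have hrat2 := ((hasDerivAt_id t).add_const 2).fun_div ((hquad.fun_pow 2).const_mul 72)
    (by positivity)
  refine (((hlog.div_const 24).add
    ((hasDerivAt_arctan_two_mul_add_one_div_sqrt_three t).const_mul (7 * √3 / 108))).add
    hrat1 |>.add hrat2).congr_deriv ?_
  simp only [id, Nat.cast_ofNat]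
  field_simp
  rw [h3]
  ring

lemma tendsto_linear_div_one_add_add_sq_atTop (a b : ℝ) :
    Tendsto (fun t => (a * t + b) / (1 + t + t ^ 2)) atTop (𝓝 0) := by
  have hcont : Tendsto (fun u : ℝ => (a * u + b * u ^ 2) / (u ^ 2 + u + 1)) (𝓝 0) (𝓝 0) := by
    have : ContinuousAt (fun u : ℝ => (a * u + b * u ^ 2) / (u ^ 2 + u + 1)) 0 := by
      fun_prop (disch := norm_num)
    simpa using this.tendsto
  refine (hcont.comp tendsto_inv_atTop_zero).congr' ?_
  filter_upwards [eventually_gt_atTop 0] with t ht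
  have := one_add_add_sq_pos t
  simp only [Function.comp_apply]
  field_simp

lemma tendsto_outerPrimitive_atTop : Tendsto outerPrimitive atTop (𝓝 (7 * √3 * π / 216)) := by
  have hQ := one_add_add_sq_pos
  have hQtop : Tendsto (fun t : ℝ => 1 + t + t ^ 2) atTop atTop :=
    tendsto_atTop_mono (fun t => by simp only [id]; nlinarith [sq_nonneg t]) tendsto_id
  have hlog : Tendsto (fun t : ℝ => log ((1 + t) ^ 2 / (1 + t + t ^ 2)) / 24) atTop (𝓝 0) := by
    have hratio : Tendsto (fun t : ℝ => (1 + t) ^ 2 / (1 + t + t ^ 2)) atTop (𝓝 1) := by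
      have := (tendsto_linear_div_one_add_add_sq_atTop 1 0).const_add 1
      rw [add_zero] at this
      refine this.congr fun t => ?_
      have := hQ t
      field_simp
      ring
    simpa using ((continuousAt_log one_ne_zero).tendsto.comp hratio).div_const 24
  have harctan : Tendsto (fun t : ℝ => 7 * √3 / 108 * arctan ((2 * t + 1) / √3)) atTop
      (𝓝 (7 * √3 * π / 216)) := by
    rw [show 7 * √3 * π / 216 = 7 * √3 / 108 * (π / 2) by ring]
    refine ((tendsto_arctan_atTop.mono_right nhdsWithin_le_nhds).comp ?_).const_mul _
    exact (tendsto_atTop_add_const_right _ _ (tendsto_id.const_mul_atTop two_pos)).atTop_div_const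
      (by positivity)
  have hrat1 : Tendsto (fun t : ℝ => (4 * t + 5) / (72 * (1 + t + t ^ 2))) atTop (𝓝 0) := by
    have h := (tendsto_linear_div_one_add_add_sq_atTop 4 5).div_const 72
    rw [zero_div] at h
    exact h.congr fun t => by have := hQ t; field_simp
  have hrat2 : Tendsto (fun t : ℝ => (t + 2) / (72 * (1 + t + t ^ 2) ^ 2)) atTop (𝓝 0) := by
    have h := ((tendsto_linear_div_one_add_add_sq_atTop 1 2).mul
      hQtop.inv_tendsto_atTop).div_const 72
    rw [zero_mul, zero_div] at h
    exact h.congr fun t => by have := hQ t; simp only [Pi.inv_apply]; field_simp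
  have h := ((hlog.add harctan).add hrat1).add hrat2
  rw [zero_add, add_zero, add_zero] at h
  exact h

lemma outerPrimitive_zero : outerPrimitive 0 = 7 * √3 * π / 648 + 7 / 72 := by
  simp only [outerPrimitive]
  norm_num [arctan_inv_sqrt_three]
  ring

lemma integral_Ioi_inner (x : ℝ) :
    ∫ y in Ioi (0 : ℝ), x * y / (1 + x ^ 2 + y ^ 2 + x ^ 2 * y ^ 2 + x ^ 4) ^ 4
      = x / (6 * (1 + x ^ 2) * (1 + x ^ 2 + x ^ 4) ^ 3) := by
  have hfactor : ∀ y : ℝ, 1 + x ^ 2 + y ^ 2 + x ^ 2 * y ^ 2 + x ^ 4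
      = (1 + x ^ 2 + x ^ 4) + (1 + x ^ 2) * y ^ 2 := fun y => by ring
  have h := integral_Ioi_div_add_mul_sq_pow_succ (A := 1 + x ^ 2 + x ^ 4) (B := 1 + x ^ 2)
    (by positivity) (by positivity) three_ne_zero
  simp_rw [hfactor, mul_div_assoc, integral_const_mul]
  rw [h]
  push_cast
  ring

lemma integral_Ioi_outer :
    ∫ x in Ioi (0 : ℝ), x / (6 * (1 + x ^ 2) * (1 + x ^ 2 + x ^ 4) ^ 3)
      = 7 * √3 * π / 216 - outerPrimitive 0 := by
  have hderiv : ∀ x ∈ Ici (0 : ℝ), HasDerivAt (fun x => outerPrimitive (x ^ 2))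
      (x / (6 * (1 + x ^ 2) * (1 + x ^ 2 + x ^ 4) ^ 3)) x := by
    intro x _
    refine ((hasDerivAt_outerPrimitive (by positivity)).comp x
      (hasDerivAt_pow 2 x)).congr_deriv ?_
    field_simp
    ring
  have hlim := tendsto_outerPrimitive_atTop.comp (tendsto_pow_atTop two_ne_zero)
  simpa using integral_Ioi_of_hasDerivAt_of_nonneg' hderiv
    (fun x hx => div_nonneg (le_of_lt hx) (by positivity)) hlim

theorem quadrant_integral_13 :
    ∫ x in Set.Ioi (0:ℝ), ∫ y in Set.Ioi (0:ℝ), x * y / (1 + x ^ 2 + y ^ 2 + x ^ 2 * y ^ 2 + x ^ 4) ^ 4 = 7 * (-9 + 2 * Real.sqrt 3 * Real.pi) / 648 := by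
  rw [setIntegral_congr_fun measurableSet_Ioi fun x _ => integral_Ioi_inner x,
    integral_Ioi_outer, outerPrimitive_zero]
  ring
end

section
/- ∫_0^∞ ∫_0^∞ x y³ / (1 + x² + y² + x² y² + x⁴)^4 dx dy = (9 − √3 π)/324. -/
/-!
With `a = 1 + x² + x⁴` and `b = 1 + x²` the denominator is `(a + b y²)⁴`, so after the
substitution `t = y²` the inner integral is elementary and equals `x / (12 a² b²)`.
The substitution `t = x²` turns the outer integral into
`1/24 ∫₀^∞ dt / ((1 + t)² (1 + t + t²)²)`, which partial fractions evaluate; the term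
`√3 π` comes from `arctan ((2t + 1) / √3)`.
-/

open MeasureTheory Real Filter Set Topology

theorem integral_Ioi_mul_comp_sq (g : ℝ → ℝ) :
    ∫ x in Ioi (0 : ℝ), x * g (x ^ 2) = (∫ t in Ioi (0 : ℝ), g t) / 2 := by
  rw [← integral_comp_rpow_Ioi g two_ne_zero, ← integral_div]
  congr with x
  norm_num [rpow_two]
  ring

theorem integral_Ioi_div_add_mul_pow_four {a b : ℝ} (ha : 0 < a) (hb : 0 < b) :
    ∫ t in Ioi (0 : ℝ), t / (a + b * t) ^ 4 = 1 / (6 * a ^ 2 * b ^ 2) := by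
  have hD : ∀ t ∈ Ici (0 : ℝ), 0 < a + b * t := fun t ht => by
    have : (0 : ℝ) ≤ t := ht
    positivity
  have hderiv : ∀ t ∈ Ici (0 : ℝ), HasDerivAt
      (fun t => (a / (3 * (a + b * t) ^ 3) - 1 / (2 * (a + b * t) ^ 2)) / b ^ 2)
      (t / (a + b * t) ^ 4) t := by
    intro t ht
    have hlin : HasDerivAt (fun t => a + b * t) b t := by
      simpa using ((hasDerivAt_id t).const_mul b).const_add a
    have hne := (hD t ht).ne'
    have h3 := (hasDerivAt_const t a).div ((hlin.fun_pow 3).const_mul 3) (by simp [hne])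
    have h2 := (hasDerivAt_const t 1).div ((hlin.fun_pow 2).const_mul 2) (by simp [hne])
    refine ((h3.sub h2).div_const (b ^ 2)).congr_deriv ?_
    field_simp
    ring
  have hlim : Tendsto (fun t => (a / (3 * (a + b * t) ^ 3) - 1 / (2 * (a + b * t) ^ 2)) / b ^ 2)
      atTop (𝓝 ((0 - 0) / b ^ 2)) := by
    have hDtop : Tendsto (fun t => a + b * t) atTop atTop :=
      tendsto_atTop_add_const_left _ a (tendsto_id.const_mul_atTop hb)
    refine ((tendsto_const_nhds.div_atTop ?_).sub (tendsto_const_nhds.div_atTop ?_)).div_const _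
    · exact ((tendsto_pow_atTop three_ne_zero).comp hDtop).const_mul_atTop (by norm_num)
    · exact ((tendsto_pow_atTop two_ne_zero).comp hDtop).const_mul_atTop (by norm_num)
  rw [integral_Ioi_of_hasDerivAt_of_nonneg' hderiv (fun t ht => ?_) hlim]
  · field_simp
    ring
  · have : (0 : ℝ) < t := ht
    positivity

theorem integral_Ioi_pow_three_div_add_mul_sq_pow_four {a b : ℝ} (ha : 0 < a) (hb : 0 < b) :
    ∫ y in Ioi (0 : ℝ), y ^ 3 / (a + b * y ^ 2) ^ 4 = 1 / (12 * a ^ 2 * b ^ 2) := by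
  have h := integral_Ioi_mul_comp_sq fun t => t / (a + b * t) ^ 4
  rw [integral_Ioi_div_add_mul_pow_four ha hb] at h
  convert h using 1
  · congr with y
    ring
  · ring

-- The derivatives of the terms are the partial fractions
-- `2/(1+t) + 1/(1+t)² - (2t+1)/A - (1+t)/A²` with `A = 1 + t + t²`.
noncomputable def antiderivInvSqMulSq (t : ℝ) : ℝ :=
  2 * log (1 + t) - log (1 + t + t ^ 2) - 1 / (1 + t) + (1 - t) / (3 * (1 + t + t ^ 2))
    - 2 * √3 / 9 * arctan ((2 * t + 1) / √3)

lemma hasDerivAt_antiderivInvSqMulSq {t : ℝ} (ht : 1 + t ≠ 0) :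
    HasDerivAt antiderivInvSqMulSq (1 / ((1 + t) ^ 2 * (1 + t + t ^ 2) ^ 2)) t := by
  have hq := (one_add_add_sq_pos t).ne'
  have h3 : √3 ^ 2 = 3 := sq_sqrt (by norm_num)
  have d1 : HasDerivAt (fun t : ℝ => 1 + t) 1 t := (hasDerivAt_id t).const_add 1
  have d2 : HasDerivAt (fun t : ℝ => 1 + t + t ^ 2) (1 + 2 * t) t := by
    simpa using ((hasDerivAt_id t).const_add 1).fun_add (hasDerivAt_pow 2 t)
  have d3 : HasDerivAt (fun t : ℝ => (2 * t + 1) / √3) (2 / √3) t := by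
    simpa using (((hasDerivAt_id t).const_mul 2).add_const 1).div_const √3
  refine (((((d1.log ht).const_mul 2).sub (d2.log hq)).sub ((hasDerivAt_const t 1).div d1 ht)).add
    ((((hasDerivAt_const t 1).fun_sub (hasDerivAt_id' t)).div (d2.const_mul 3) (by simp [hq])))
    |>.sub (d3.arctan.const_mul _)).congr_deriv ?_
  field_simp
  rw [h3]
  ring

lemma tendsto_antiderivInvSqMulSq_atTop :
    Tendsto antiderivInvSqMulSq atTop (𝓝 (-(√3 * π / 9))) := by
  -- Apart from the arctangent, the function is a continuous function of `1 / t` vanishing at `0`.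
  set h : ℝ → ℝ := fun u =>
    2 * log (1 + u) - log (1 + u + u ^ 2) - u / (1 + u) + (u ^ 2 - u) / (3 * (1 + u + u ^ 2))
  have hh : Tendsto (fun t : ℝ => h t⁻¹) atTop (𝓝 0) := by
    have hcont : ContinuousAt h 0 := by fun_prop (disch := norm_num)
    have h0 : h 0 = 0 := by simp [h]
    have := hcont.tendsto.comp tendsto_inv_atTop_zero
    rwa [h0] at this
  have harctan : Tendsto (fun t => arctan ((2 * t + 1) / √3)) atTop (𝓝 (π / 2)) := by
    refine (tendsto_arctan_atTop.mono_right nhdsWithin_le_nhds).comp ?_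
    exact (tendsto_atTop_add_const_right _ 1 (tendsto_id.const_mul_atTop two_pos)).atTop_div_const
      (by positivity)
  have heq : ∀ᶠ t in atTop, h t⁻¹ - 2 * √3 / 9 * arctan ((2 * t + 1) / √3)
      = antiderivInvSqMulSq t := by
    filter_upwards [eventually_gt_atTop 0] with t ht
    have e1 : log (1 + t) = log t + log (1 + t⁻¹) := by
      rw [← log_mul ht.ne' (by positivity)]
      congr 1
      field_simp
      ring
    have e2 : log (1 + t + t ^ 2) = 2 * log t + log (1 + t⁻¹ + t⁻¹ ^ 2) := by
      rw [show 1 + t + t ^ 2 = t ^ 2 * (1 + t⁻¹ + t⁻¹ ^ 2) by field_simp; ring,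
        log_mul (by positivity) (by positivity), log_pow]
      push_cast
      ring
    simp only [h, antiderivInvSqMulSq, e1, e2]
    field_simp
    ring
  convert (hh.sub (harctan.const_mul _)).congr' heq using 2
  ring

lemma antiderivInvSqMulSq_zero : antiderivInvSqMulSq 0 = -2 / 3 - √3 * π / 27 := by
  simp only [antiderivInvSqMulSq]
  norm_num [arctan_inv_sqrt_three]
  ring

theorem integral_Ioi_one_div_sq_mul_sq :
    ∫ t in Ioi (0 : ℝ), 1 / ((1 + t) ^ 2 * (1 + t + t ^ 2) ^ 2)
      = 2 / 3 - 2 * √3 * π / 27 := by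
  have hderiv : ∀ t ∈ Ici (0 : ℝ), HasDerivAt antiderivInvSqMulSq
      (1 / ((1 + t) ^ 2 * (1 + t + t ^ 2) ^ 2)) t := fun t ht =>
    hasDerivAt_antiderivInvSqMulSq (by have : (0 : ℝ) ≤ t := ht; positivity)
  rw [integral_Ioi_of_hasDerivAt_of_nonneg' hderiv (fun t _ => by positivity)
    tendsto_antiderivInvSqMulSq_atTop, antiderivInvSqMulSq_zero]
  ring

theorem quadrant_integral_15 :
    ∫ x in Set.Ioi (0:ℝ), ∫ y in Set.Ioi (0:ℝ), x * y ^ 3 / (1 + x ^ 2 + y ^ 2 + x ^ 2 * y ^ 2 + x ^ 4) ^ 4 = (9 - Real.sqrt 3 * Real.pi) / 324 := by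
  have hinner (x : ℝ) : ∫ y in Ioi (0 : ℝ),
      x * y ^ 3 / (1 + x ^ 2 + y ^ 2 + x ^ 2 * y ^ 2 + x ^ 4) ^ 4
      = x * (1 / 12 * (1 / ((1 + x ^ 2) ^ 2 * (1 + x ^ 2 + (x ^ 2) ^ 2) ^ 2))) := by
    calc _ = x * ∫ y in Ioi (0 : ℝ),
          y ^ 3 / ((1 + x ^ 2 + x ^ 4) + (1 + x ^ 2) * y ^ 2) ^ 4 := by
          rw [← integral_const_mul]
          congr with y
          ring
      _ = _ := by
          rw [integral_Ioi_pow_three_div_add_mul_sq_pow_four (by positivity) (by positivity)]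
          field_simp
  calc _ = ∫ x in Ioi (0 : ℝ),
          x * (1 / 12 * (1 / ((1 + x ^ 2) ^ 2 * (1 + x ^ 2 + (x ^ 2) ^ 2) ^ 2))) := by
        simp_rw [hinner]
    _ = 1 / 12 * (∫ t in Ioi (0 : ℝ), 1 / ((1 + t) ^ 2 * (1 + t + t ^ 2) ^ 2)) / 2 := by
        rw [integral_Ioi_mul_comp_sq fun t => 1 / 12 * (1 / ((1 + t) ^ 2 * (1 + t + t ^ 2) ^ 2)),
          integral_const_mul]
    _ = _ := by
        rw [integral_Ioi_one_div_sq_mul_sq]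
        ring
end

section
/- ∫_0^∞ ∫_0^∞ x⁵ y³ / (1 + x² + y² + x² y² + x⁴)^4 dx dy = (45 − 8√3 π)/648. -/
/-!
In the inner integral the denominator is `A + B y²` with `A = 1 + x² + x⁴` and `B = 1 + x²`,
and `∫₀^∞ y³ / (A + B y²)⁴ dy = 1 / (12 A² B²)`. The remaining one-variable integral of
`x⁵ / (12 A² B²)` has an elementary antiderivative, whose arctangent term
`arctan ((1 + 2x²) / √3)` runs from `π / 6` to `π / 2` and produces the `√3 π`.
-/

open MeasureTheory Real Filter Topology Set

lemma tendsto_add_mul_sq_atTop (a : ℝ) {b : ℝ} (hb : 0 < b) :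
    Tendsto (fun y : ℝ => a + b * y ^ 2) atTop atTop :=
  tendsto_atTop_add_const_left _ a ((tendsto_pow_atTop two_ne_zero).const_mul_atTop hb)

lemma tendsto_const_div_add_mul_sq_atTop (c a : ℝ) {b : ℝ} (hb : 0 < b) :
    Tendsto (fun y : ℝ => c / (a + b * y ^ 2)) atTop (𝓝 0) :=
  tendsto_const_nhds.div_atTop (tendsto_add_mul_sq_atTop a hb)

section CubeDivQuadraticPowFour

variable {A B : ℝ}

lemma hasDerivAt_cube_div_quadratic_pow_four (hB : B ≠ 0) {y : ℝ} (hw : A + B * y ^ 2 ≠ 0) :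
    HasDerivAt
      (fun y => A / (6 * B ^ 2 * (A + B * y ^ 2) ^ 3) - 1 / (4 * B ^ 2 * (A + B * y ^ 2) ^ 2))
      (y ^ 3 / (A + B * y ^ 2) ^ 4) y := by
  have hquad : HasDerivAt (fun y => A + B * y ^ 2) (B * (2 * y)) y := by
    simpa using ((hasDerivAt_pow 2 y).const_mul B).const_add A
  have h := ((hasDerivAt_const y A).div ((hquad.pow 3).const_mul (6 * B ^ 2)) (by simp [hB, hw])).sub
    ((hasDerivAt_const y 1).div ((hquad.pow 2).const_mul (4 * B ^ 2)) (by simp [hB, hw]))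
  refine h.congr_deriv ?_
  simp only [Pi.pow_apply]
  field_simp
  ring

theorem integral_Ioi_cube_div_quadratic_pow_four (hA : 0 < A) (hB : 0 < B) :
    ∫ y in Ioi (0 : ℝ), y ^ 3 / (A + B * y ^ 2) ^ 4 = 1 / (12 * A ^ 2 * B ^ 2) := by
  have hw := tendsto_add_mul_sq_atTop A hB
  have hlim : Tendsto (fun y => A / (6 * B ^ 2 * (A + B * y ^ 2) ^ 3)
      - 1 / (4 * B ^ 2 * (A + B * y ^ 2) ^ 2)) atTop (𝓝 0) := by
    simpa only [sub_zero, Function.comp_def] using ((tendsto_const_nhds (x := A)).div_atTop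
      (((tendsto_pow_atTop three_ne_zero).comp hw).const_mul_atTop
        (show (0 : ℝ) < 6 * B ^ 2 by positivity))).sub
      ((tendsto_const_nhds (x := (1 : ℝ))).div_atTop
        (((tendsto_pow_atTop two_ne_zero).comp hw).const_mul_atTop
          (show (0 : ℝ) < 4 * B ^ 2 by positivity)))
  rw [integral_Ioi_of_hasDerivAt_of_nonneg'
    (fun y _ => hasDerivAt_cube_div_quadratic_pow_four hB.ne' (by positivity))
    (fun y (hy : 0 < y) => by positivity) hlim]
  field_simp
  ring

end CubeDivQuadraticPowFour

lemma hasDerivAt_pow_five_div_sq_quartic_mul_sq_quadratic (x : ℝ) :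
    HasDerivAt (fun x => -(4 * √3 / 9) * arctan ((1 + 2 * x ^ 2) / √3)
        - (x ^ 2 + 2) / (6 * (x ^ 4 + x ^ 2 + 1)) - 1 / (2 + 2 * x ^ 2))
      (x ^ 5 / ((1 + x ^ 2 + x ^ 4) ^ 2 * (1 + x ^ 2) ^ 2)) x := by
  have hsqrt : √3 ^ 2 = 3 := sq_sqrt (by norm_num)
  have hsq : HasDerivAt (fun x => x ^ 2) (2 * x) x := by simpa using hasDerivAt_pow 2 x
  have hquartic : HasDerivAt (fun x => x ^ 4 + x ^ 2 + 1) (4 * x ^ 3 + 2 * x) x := by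
    simpa using ((hasDerivAt_pow 4 x).add hsq).add_const 1
  have h := ((((hsq.const_mul 2).const_add 1).div_const √3).arctan.const_mul (-(4 * √3 / 9))).sub
      ((hsq.add_const 2).div (hquartic.const_mul 6) (by positivity)) |>.sub
    ((hasDerivAt_const x 1).div ((hsq.const_mul 2).const_add 2) (by positivity))
  refine h.congr_deriv ?_
  rw [div_pow, hsqrt]
  field_simp
  ring

lemma tendsto_quadratic_div_quartic_atTop :
    Tendsto (fun x : ℝ => (x ^ 2 + 2) / (6 * (x ^ 4 + x ^ 2 + 1))) atTop (𝓝 0) := by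
  refine squeeze_zero (fun x => by positivity) (fun x => ?_)
    (tendsto_const_div_add_mul_sq_atTop 1 2 two_pos)
  rw [div_le_div_iff₀ (by positivity) (by positivity)]
  nlinarith [sq_nonneg x, sq_nonneg (x ^ 2)]

theorem integral_Ioi_pow_five_div_sq_quartic_mul_sq_quadratic :
    ∫ x in Ioi (0 : ℝ), x ^ 5 / ((1 + x ^ 2 + x ^ 4) ^ 2 * (1 + x ^ 2) ^ 2)
      = 5 / 6 - 4 * √3 * π / 27 := by
  have harctan : Tendsto (fun x : ℝ => arctan ((1 + 2 * x ^ 2) / √3)) atTop (𝓝 (π / 2)) :=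
    (tendsto_arctan_atTop.mono_right nhdsWithin_le_nhds).comp
      ((tendsto_add_mul_sq_atTop 1 two_pos).atTop_div_const (by positivity))
  have hlim := ((harctan.const_mul (-(4 * √3 / 9))).sub tendsto_quadratic_div_quartic_atTop).sub
    (tendsto_const_div_add_mul_sq_atTop 1 2 two_pos)
  rw [integral_Ioi_of_hasDerivAt_of_nonneg'
    (fun x _ => hasDerivAt_pow_five_div_sq_quartic_mul_sq_quadratic x)
    (fun x (hx : 0 < x) => by positivity) hlim]
  norm_num [arctan_inv_sqrt_three]
  ring

theorem quadrant_integral_17 :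
    ∫ x in Set.Ioi (0:ℝ), ∫ y in Set.Ioi (0:ℝ), x ^ 5 * y ^ 3 / (1 + x ^ 2 + y ^ 2 + x ^ 2 * y ^ 2 + x ^ 4) ^ 4 = (45 - 8 * Real.sqrt 3 * Real.pi) / 648 := by
  have hinner (x : ℝ) : ∫ y in Ioi (0 : ℝ), x ^ 5 * y ^ 3 / (1 + x ^ 2 + y ^ 2 + x ^ 2 * y ^ 2 + x ^ 4) ^ 4
      = x ^ 5 / ((1 + x ^ 2 + x ^ 4) ^ 2 * (1 + x ^ 2) ^ 2) / 12 := by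
    have hden (y : ℝ) : 1 + x ^ 2 + y ^ 2 + x ^ 2 * y ^ 2 + x ^ 4
        = (1 + x ^ 2 + x ^ 4) + (1 + x ^ 2) * y ^ 2 := by ring
    simp_rw [hden, mul_div_assoc, integral_const_mul]
    rw [integral_Ioi_cube_div_quadratic_pow_four (by positivity) (by positivity)]
    field_simp
  simp_rw [hinner]
  rw [integral_div, integral_Ioi_pow_five_div_sq_quartic_mul_sq_quadratic]
  ring
end

section
/- ∫_0^∞ ∫_0^∞ x⁷ y / (1 + x² + y² + x² y² + x⁴)^4 dx dy = (−9 + 2√3 π)/648. -/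
open MeasureTheory Real Filter Set Topology

/-!
For fixed `x`, the integrand is `x⁷ y / (a y² + b)⁴` with `a = 1 + x²` and `b = 1 + x² + x⁴`, whose
`y`-primitive is `-x⁷ / (6 a (a y² + b)³)`; hence the inner integral is `x⁷ / (6 a b³)`.
Substituting `t = x²` leaves `(1/12) ∫₀^∞ t³ / ((1 + t)(1 + t + t²)³) dt`, which partial fractions
reduce to logarithms, rational terms and `arctan ((2t + 1)/√3)`; the latter rises from `π/6` to
`π/2`, which is where `√3 π` comes from.
-/

theorem integral_Ioi_smul_comp_sq {E : Type*} [NormedAddCommGroup E] [NormedSpace ℝ E]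
    (f : ℝ → E) : ∫ x in Ioi 0, x • f (x ^ 2) = (1 / 2 : ℝ) • ∫ t in Ioi 0, f t := by
  rw [← integral_comp_rpow_Ioi_of_pos (g := f) two_pos, ← integral_smul]
  refine setIntegral_congr_fun measurableSet_Ioi fun x _ => ?_
  norm_num [smul_smul]
  congr 1
  ring

theorem integral_Ioi_div_mul_sq_add_pow_succ {a b : ℝ} (ha : 0 < a) (hb : 0 < b) {n : ℕ}
    (hn : n ≠ 0) : ∫ y in Ioi 0, y / (a * y ^ 2 + b) ^ (n + 1) = 1 / (2 * n * a * b ^ n) := by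
  have hq : ∀ y : ℝ, 0 < a * y ^ 2 + b := fun y => by positivity
  have hderiv : ∀ y, HasDerivAt (fun y => -(2 * n * a)⁻¹ * ((a * y ^ 2 + b) ^ n)⁻¹)
      (y / (a * y ^ 2 + b) ^ (n + 1)) y := by
    intro y
    have h := (((((hasDerivAt_pow 2 y).const_mul a).add_const b).pow n).inv
      (pow_ne_zero n (hq y).ne')).const_mul (-(2 * n * a)⁻¹)
    refine h.congr_deriv ?_
    obtain ⟨m, rfl⟩ := Nat.exists_eq_add_one_of_ne_zero hn
    have hqy := hq y
    simp only [Pi.pow_apply]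
    field_simp
    push_cast
    ring
  have hnonneg : ∀ y ∈ Ioi (0 : ℝ), 0 ≤ y / (a * y ^ 2 + b) ^ (n + 1) := fun y hy =>
    div_nonneg (le_of_lt hy) (pow_pos (hq y) _).le
  have hlim : Tendsto (fun y => -(2 * n * a)⁻¹ * ((a * y ^ 2 + b) ^ n)⁻¹) atTop (𝓝 0) := by
    have hsq : Tendsto (fun y : ℝ => a * y ^ 2 + b) atTop atTop :=
      tendsto_atTop_add_const_right _ b ((tendsto_pow_atTop two_ne_zero).const_mul_atTop ha)
    simpa using (tendsto_inv_atTop_zero.comp ((tendsto_pow_atTop hn).comp hsq)).const_mul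
      (-(2 * n * a)⁻¹)
  rw [integral_Ioi_of_hasDerivAt_of_nonneg' (fun y _ => hderiv y) hnonneg hlim]
  field_simp
  simp

noncomputable def quadrantPrimitive (t : ℝ) : ℝ :=
  log (1 + t + t ^ 2) / 2 - log (1 + t) + √3 / 9 * arctan ((2 * t + 1) / √3)
    + (4 * t - 1) / (6 * (1 + t + t ^ 2)) + (t + 2) / (6 * (1 + t + t ^ 2) ^ 2)

lemma hasDerivAt_quadrantPrimitive {t : ℝ} (ht : -1 < t) :
    HasDerivAt quadrantPrimitive (t ^ 3 / ((1 + t) * (1 + t + t ^ 2) ^ 3)) t := by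
  have hq := one_add_add_sq_pos t
  have hp : 0 < 1 + t := by linarith
  have hQ : HasDerivAt (fun t : ℝ => 1 + t + t ^ 2) (1 + 2 * t) t :=
    (((hasDerivAt_id' t).const_add 1).add (hasDerivAt_pow 2 t)).congr_deriv (by push_cast; ring)
  have hQ2 : HasDerivAt (fun t : ℝ => (1 + t + t ^ 2) ^ 2)
      (2 * (1 + t + t ^ 2) * (1 + 2 * t)) t :=
    (hQ.pow 2).congr_deriv (by push_cast; ring)
  have hL : HasDerivAt (fun t : ℝ => 1 + t) 1 t := by
    simpa using (hasDerivAt_id t).const_add 1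
  have hR1 : HasDerivAt (fun t : ℝ => 4 * t - 1) 4 t := by
    simpa using ((hasDerivAt_id t).const_mul 4).sub_const 1
  have hR2 : HasDerivAt (fun t : ℝ => t + 2) 1 t := by
    simpa using (hasDerivAt_id t).add_const 2
  have h := (((((hQ.log hq.ne').div_const 2).sub (hL.log hp.ne')).add
    ((hasDerivAt_arctan_two_mul_add_one_div_sqrt_three t).const_mul (√3 / 9))).add
    (hR1.div (hQ.const_mul 6) (by positivity))).add
    (hR2.div (hQ2.const_mul 6) (by positivity))
  refine h.congr_deriv ?_
  have h3 : √3 ^ 2 = 3 := sq_sqrt (by norm_num)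
  field_simp
  rw [h3]
  ring

lemma tendsto_log_div_two_sub_log_atTop :
    Tendsto (fun t => log (1 + t + t ^ 2) / 2 - log (1 + t)) atTop (𝓝 0) := by
  have hsmall : Tendsto (fun t : ℝ => t / (1 + t) ^ 2) atTop (𝓝 0) := by
    refine squeeze_zero' ?_ ?_
      (tendsto_inv_atTop_zero.comp (tendsto_atTop_add_const_left _ 1 tendsto_id))
    · filter_upwards [eventually_ge_atTop 0] with t ht
      positivity
    · filter_upwards [eventually_ge_atTop 0] with t ht
      rw [Function.comp_apply, id, div_le_iff₀ (by positivity)]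
      field_simp
      linarith
  have hone : Tendsto (fun t : ℝ => 1 - t / (1 + t) ^ 2) atTop (𝓝 1) := by
    simpa using hsmall.const_sub 1
  have hlog := ((continuousAt_log one_ne_zero).tendsto.comp hone).div_const 2
  rw [log_one, zero_div] at hlog
  refine hlog.congr' ?_
  filter_upwards [eventually_ge_atTop 0] with t ht
  have hq := one_add_add_sq_pos t
  have : 1 - t / (1 + t) ^ 2 = (1 + t + t ^ 2) / (1 + t) ^ 2 := by
    field_simp
    ring
  rw [Function.comp_apply, this, log_div hq.ne' (by positivity), log_pow]
  push_cast
  ring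

lemma tendsto_quadrantPrimitive_atTop :
    Tendsto quadrantPrimitive atTop (𝓝 (√3 * π / 18)) := by
  have hinv : Tendsto (fun t : ℝ => (1 + t)⁻¹) atTop (𝓝 0) :=
    tendsto_inv_atTop_zero.comp (tendsto_atTop_add_const_left _ 1 tendsto_id)
  have harctan : Tendsto (fun t => arctan ((2 * t + 1) / √3)) atTop (𝓝 (π / 2)) := by
    refine (tendsto_nhds_of_tendsto_nhdsWithin tendsto_arctan_atTop).comp ?_
    exact (tendsto_atTop_add_const_right _ 1
      (tendsto_id.const_mul_atTop two_pos)).atTop_div_const (by positivity)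
  have hR1 : Tendsto (fun t : ℝ => (4 * t - 1) / (6 * (1 + t + t ^ 2))) atTop (𝓝 0) := by
    refine squeeze_zero' ?_ ?_ hinv
    · filter_upwards [eventually_ge_atTop 1] with t ht
      have hq := one_add_add_sq_pos t
      exact div_nonneg (by linarith) (by positivity)
    · filter_upwards [eventually_ge_atTop 1] with t ht
      have hq := one_add_add_sq_pos t
      rw [div_le_iff₀ (by positivity)]
      field_simp
      nlinarith
  have hR2 : Tendsto (fun t : ℝ => (t + 2) / (6 * (1 + t + t ^ 2) ^ 2)) atTop (𝓝 0) := by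
    refine squeeze_zero' ?_ ?_ hinv
    · filter_upwards [eventually_ge_atTop 0] with t ht
      have hq := one_add_add_sq_pos t
      positivity
    · filter_upwards [eventually_ge_atTop 0] with t ht
      have hq := one_add_add_sq_pos t
      rw [div_le_iff₀ (by positivity)]
      field_simp
      nlinarith
  have h := ((tendsto_log_div_two_sub_log_atTop.add (harctan.const_mul (√3 / 9))).add hR1).add hR2
  rw [show √3 * π / 18 = 0 + √3 / 9 * (π / 2) + 0 + 0 by ring]
  exact h

lemma quadrantPrimitive_zero : quadrantPrimitive 0 = √3 * π / 54 + 1 / 6 := by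
  have harctan : arctan (1 / √3) = π / 6 := by
    rw [← tan_pi_div_six, arctan_tan] <;> linarith [pi_pos]
  simp only [quadrantPrimitive]
  norm_num [harctan]
  ring

theorem integral_Ioi_cube_div_one_add_mul_one_add_add_sq_cube :
    ∫ t in Ioi 0, t ^ 3 / ((1 + t) * (1 + t + t ^ 2) ^ 3) = √3 * π / 27 - 1 / 6 := by
  have hnonneg : ∀ t ∈ Ioi (0 : ℝ), 0 ≤ t ^ 3 / ((1 + t) * (1 + t + t ^ 2) ^ 3) := by
    intro t ht
    have : 0 < t := ht
    positivity
  rw [integral_Ioi_of_hasDerivAt_of_nonneg'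
    (fun t ht => hasDerivAt_quadrantPrimitive (by linarith [mem_Ici.mp ht])) hnonneg
    tendsto_quadrantPrimitive_atTop, quadrantPrimitive_zero]
  ring

lemma integral_Ioi_pow_seven_mul_div_pow_four (x : ℝ) :
    ∫ y in Ioi 0, x ^ 7 * y / (1 + x ^ 2 + y ^ 2 + x ^ 2 * y ^ 2 + x ^ 4) ^ 4
      = x ^ 7 / (6 * (1 + x ^ 2) * (1 + x ^ 2 + x ^ 4) ^ 3) := by
  have h := integral_Ioi_div_mul_sq_add_pow_succ (a := 1 + x ^ 2) (b := 1 + x ^ 2 + x ^ 4)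
    (by positivity) (by positivity) three_ne_zero
  calc ∫ y in Ioi 0, x ^ 7 * y / (1 + x ^ 2 + y ^ 2 + x ^ 2 * y ^ 2 + x ^ 4) ^ 4
      = ∫ y in Ioi 0, x ^ 7 * (y / ((1 + x ^ 2) * y ^ 2 + (1 + x ^ 2 + x ^ 4)) ^ (3 + 1)) := by
        congr 1 with y
        ring
    _ = x ^ 7 / (6 * (1 + x ^ 2) * (1 + x ^ 2 + x ^ 4) ^ 3) := by
        rw [integral_const_mul, h]
        push_cast
        ring

theorem quadrant_integral_18 :
    ∫ x in Set.Ioi (0:ℝ), ∫ y in Set.Ioi (0:ℝ), x ^ 7 * y / (1 + x ^ 2 + y ^ 2 + x ^ 2 * y ^ 2 + x ^ 4) ^ 4 = (-9 + 2 * Real.sqrt 3 * Real.pi) / 648 := by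
  calc ∫ x in Ioi (0 : ℝ), ∫ y in Ioi (0 : ℝ),
        x ^ 7 * y / (1 + x ^ 2 + y ^ 2 + x ^ 2 * y ^ 2 + x ^ 4) ^ 4
      = ∫ x in Ioi (0 : ℝ), x • ((x ^ 2) ^ 3 / ((1 + x ^ 2) * (1 + x ^ 2 + (x ^ 2) ^ 2) ^ 3) / 6) := by
        congr 1 with x
        rw [integral_Ioi_pow_seven_mul_div_pow_four, smul_eq_mul]
        field_simp
    _ = (1 / 2 : ℝ) • ∫ t in Ioi (0 : ℝ), t ^ 3 / ((1 + t) * (1 + t + t ^ 2) ^ 3) / 6 :=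
        integral_Ioi_smul_comp_sq fun t => t ^ 3 / ((1 + t) * (1 + t + t ^ 2) ^ 3) / 6
    _ = (-9 + 2 * √3 * π) / 648 := by
        rw [integral_div, integral_Ioi_cube_div_one_add_mul_one_add_add_sq_cube, smul_eq_mul]
        ring
end
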